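/- arXiv:1701.00254 — 3 statements merged into one kernel-verified Lean document; each statement's English description precedes it below -/
import Mathlib

section
/- Assume p is a prime not dividing D. Let S2 be a finite subset of M(Δ) and let Q1, ..., Qk be points of M(Δ) whose weights w(Qi) are integers. Then the multiset S1 := (S2 + Q1) ⊎ (S2 + Q2) ⊎ ... ⊎ (S2 + Qk) (disjoint multiset union of the k translates of S2) satisfies h2(S1) = k*h2(S2). -/
open Finset

noncomputable section

/-- The weight of a lattice point `P`: `w(P) = ((b1-b2)*x + (a2-a1)*y) / D`
where `D = a2*b1 - a1*b2`. -/
def wt (a1 b1 a2 b2 : ℤ) (P : ℤ × ℤ) : ℚ :=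
  (((b1 - b2) * P.1 + (a2 - a1) * P.2 : ℤ) : ℚ) / ((a2 * b1 - a1 * b2 : ℤ) : ℚ)

/-- The lattice points of the cone spanned by the triangle with vertices
`O`, `P1 = (a1,b1)`, `P2 = (a2,b2)`. -/
def MDelta (a1 b1 a2 b2 : ℤ) : Set (ℤ × ℤ) :=
  {P | ∃ s t : ℚ, 0 ≤ s ∧ 0 ≤ t ∧
    (P.1 : ℚ) = s * a1 + t * a2 ∧ (P.2 : ℚ) = s * b1 + t * b2}

/-- The lattice generated by `P1` and `P2`. -/
def Lambda (a1 b1 a2 b2 : ℤ) : Set (ℤ × ℤ) :=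
  {P | ∃ m n : ℤ, P = (m * a1 + n * a2, m * b1 + n * b2)}

/-- The lattice points of the fundamental parallelogram
`{s*P1 + t*P2 : 0 ≤ s,t < 1}`. -/
def squareInt (a1 b1 a2 b2 : ℤ) : Set (ℤ × ℤ) :=
  {P | ∃ s t : ℚ, 0 ≤ s ∧ s < 1 ∧ 0 ≤ t ∧ t < 1 ∧
    (P.1 : ℚ) = s * a1 + t * a2 ∧ (P.2 : ℚ) = s * b1 + t * b2}

/-- `h(S, τ) = Σ_{P ∈ S} ⌈w(p·τ(P) - P)⌉` for a multiset indexed by `f` and a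
permutation `τ` of the indices. -/
def hTau (p a1 b1 a2 b2 : ℤ) {n : ℕ} (f : Fin n → ℤ × ℤ)
    (τ : Equiv.Perm (Fin n)) : ℤ :=
  ∑ i, ⌈wt a1 b1 a2 b2 (p • f (τ i) - f i)⌉

/-- `h2(S, τ) = Σ_{P ∈ S} R(w(p·τ(P) - P))` where `R(r) = ⌈r⌉ - r`. -/
def h2Tau (p a1 b1 a2 b2 : ℤ) {n : ℕ} (f : Fin n → ℤ × ℤ)
    (τ : Equiv.Perm (Fin n)) : ℚ :=
  ∑ i, ((⌈wt a1 b1 a2 b2 (p • f (τ i) - f i)⌉ : ℚ)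
        - wt a1 b1 a2 b2 (p • f (τ i) - f i))

/-- A canonical indexing of a multiset. -/
def listFn (S : Multiset (ℤ × ℤ)) : Fin S.toList.length → ℤ × ℤ := S.toList.get

/-- `h(S)`: the minimum of `h(S,τ)` over all permutations `τ` of `S`. -/
def hMin (p a1 b1 a2 b2 : ℤ) (S : Multiset (ℤ × ℤ)) : ℤ :=
  Finset.univ.inf' (Finset.univ_nonempty_iff.mpr ⟨1⟩)
    fun τ : Equiv.Perm (Fin S.toList.length) => hTau p a1 b1 a2 b2 (listFn S) τ

/-- `h2(S)`: the minimum of `h2(S,τ)` over all permutations `τ` of `S`. -/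
def h2Min (p a1 b1 a2 b2 : ℤ) (S : Multiset (ℤ × ℤ)) : ℚ :=
  Finset.univ.inf' (Finset.univ_nonempty_iff.mpr ⟨1⟩)
    fun τ : Equiv.Perm (Fin S.toList.length) => h2Tau p a1 b1 a2 b2 (listFn S) τ

/-!
Translating both points by lattice points of integral weight changes `w(p·τ(P) - P)` by an
integer, so the cost `R(w(p·τ(P) - P))` of a pair of points of `S1` depends only on the points of
`S2` they are translates of. Repeating an optimal permutation of `S2` on every translate gives
`h2(S1) ≤ k·h2(S2)`. Conversely, a permutation of `S1` induces a matrix on `S2` counting how many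
translates of `P` are sent to translates of `P'`; all its row and column sums equal `k`, so by
Birkhoff's theorem it is `k` times a convex combination of permutation matrices, and its cost is at
least `k·h2(S2)`.
-/

section MinPermSum

variable {ι : Type*} [Fintype ι] [DecidableEq ι]

def minPermSum (C : ι → ι → ℚ) : ℚ :=
  univ.inf' univ_nonempty fun σ : Equiv.Perm ι => ∑ i, C i (σ i)

lemma minPermSum_le (C : ι → ι → ℚ) (σ : Equiv.Perm ι) : minPermSum C ≤ ∑ i, C i (σ i) :=
  inf'_le _ (mem_univ σ)

lemma exists_sum_eq_minPermSum (C : ι → ι → ℚ) :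
    ∃ σ : Equiv.Perm ι, ∑ i, C i (σ i) = minPermSum C := by
  obtain ⟨σ, -, h⟩ := exists_mem_eq_inf' univ_nonempty fun σ : Equiv.Perm ι => ∑ i, C i (σ i)
  exact ⟨σ, h.symm⟩

lemma le_minPermSum {C : ι → ι → ℚ} {m : ℚ} (h : ∀ σ : Equiv.Perm ι, m ≤ ∑ i, C i (σ i)) :
    m ≤ minPermSum C :=
  le_inf' _ _ fun σ _ => h σ

lemma minPermSum_le_sum_mul_of_mem_doublyStochastic (C : ι → ι → ℚ)
    {M : Matrix ι ι ℚ} (hM : M ∈ doublyStochastic ℚ ι) :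
    minPermSum C ≤ ∑ i, ∑ j, M i j * C i j := by
  obtain ⟨w, hw0, hw1, rfl⟩ := exists_eq_sum_perm_of_mem_doublyStochastic hM
  have hperm : ∀ σ : Equiv.Perm ι, ∑ i, ∑ j, σ.permMatrix ℚ i j * C i j = ∑ i, C i (σ i) := by
    intro σ
    simp [Equiv.Perm.permMatrix, PEquiv.toMatrix_apply, Equiv.toPEquiv_apply]
  calc minPermSum C = ∑ σ, w σ * minPermSum C := by rw [← sum_mul, hw1, one_mul]
    _ ≤ ∑ σ, w σ * ∑ i, C i (σ i) :=
      sum_le_sum fun σ _ => mul_le_mul_of_nonneg_left (minPermSum_le C σ) (hw0 σ)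
    _ = ∑ i, ∑ j, (∑ σ, w σ • σ.permMatrix ℚ) i j * C i j := by
      simp_rw [← hperm, mul_sum, Matrix.sum_apply, sum_mul, Matrix.smul_apply, smul_eq_mul, mul_assoc]
      rw [sum_comm]
      exact sum_congr rfl fun i _ => sum_comm

variable {κ : Type*} [Fintype κ]

lemma sum_ite_snd_eq (a : ι) :
    ∑ x : κ × ι, (if x.2 = a then (1 : ℚ) else 0) = Fintype.card κ := by
  rw [Fintype.sum_prod_type]
  simp

def sndCountMatrix (σ : Equiv.Perm (κ × ι)) : Matrix ι ι ℚ :=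
  fun a b => ∑ x, if x.2 = a ∧ (σ x).2 = b then 1 else 0

lemma sum_sndCountMatrix_row (σ : Equiv.Perm (κ × ι)) (a : ι) :
    ∑ b, sndCountMatrix σ a b = Fintype.card κ := by
  simp only [sndCountMatrix, ite_and]
  rw [sum_comm]
  simp only [sum_ite_irrel, sum_ite_eq, mem_univ, if_true, sum_const_zero]
  exact sum_ite_snd_eq a

lemma sum_sndCountMatrix_col (σ : Equiv.Perm (κ × ι)) (b : ι) :
    ∑ a, sndCountMatrix σ a b = Fintype.card κ := by
  simp only [sndCountMatrix, ite_and]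
  rw [sum_comm]
  simp only [sum_ite_eq, mem_univ, if_true]
  rw [Equiv.sum_comp σ fun y => if y.2 = b then (1 : ℚ) else 0]
  exact sum_ite_snd_eq b

lemma sum_sndCountMatrix_mul (σ : Equiv.Perm (κ × ι)) (C : ι → ι → ℚ) :
    ∑ a, ∑ b, sndCountMatrix σ a b * C a b = ∑ x, C x.2 (σ x).2 := by
  simp only [sndCountMatrix, sum_mul, ite_mul, one_mul, zero_mul, ite_and]
  rw [sum_congr rfl fun a _ => sum_comm, sum_comm]
  simp only [sum_ite_irrel, sum_ite_eq, mem_univ, if_true, sum_const_zero]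

lemma card_mul_minPermSum_le (C : ι → ι → ℚ) (σ : Equiv.Perm (κ × ι)) :
    Fintype.card κ * minPermSum C ≤ ∑ x, C x.2 (σ x).2 := by
  rcases isEmpty_or_nonempty κ with hκ | hκ
  · simp
  have hk : (0 : ℚ) < Fintype.card κ := by exact_mod_cast Fintype.card_pos
  have hM : (Fintype.card κ : ℚ)⁻¹ • sndCountMatrix σ ∈ doublyStochastic ℚ ι := by
    refine mem_doublyStochastic_iff_sum.2 ⟨fun a b => ?_, fun a => ?_, fun b => ?_⟩
    · exact smul_nonneg (inv_nonneg.2 hk.le) (sum_nonneg fun x _ => by split_ifs <;> norm_num)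
    · simp [← mul_sum, sum_sndCountMatrix_row, hk.ne']
    · simp [← mul_sum, sum_sndCountMatrix_col, hk.ne']
  have := minPermSum_le_sum_mul_of_mem_doublyStochastic C hM
  simp only [Matrix.smul_apply, smul_eq_mul, mul_assoc, ← mul_sum, sum_sndCountMatrix_mul] at this
  rwa [le_inv_mul_iff₀ hk] at this

variable [DecidableEq κ]

lemma minPermSum_comp_equiv (C : κ → κ → ℚ) (e : ι ≃ κ) :
    minPermSum (fun i j => C (e i) (e j)) = minPermSum C := by
  have hsum : ∀ σ : Equiv.Perm ι,
      ∑ i, C (e i) (e (σ i)) = ∑ j, C j (e.permCongr σ j) := fun σ => by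
    rw [← e.sum_comp]; simp [Equiv.permCongr_apply]
  refine le_antisymm (le_minPermSum fun τ => ?_) (le_minPermSum fun σ => ?_)
  · simpa [hsum, e.sum_comp fun j => C j (τ j)] using
      minPermSum_le (fun i j => C (e i) (e j)) (e.permCongr.symm τ)
  · simpa [hsum] using minPermSum_le C (e.permCongr σ)

lemma minPermSum_comp_snd_le (C : ι → ι → ℚ) :
    minPermSum (fun x y : κ × ι => C x.2 y.2) ≤ Fintype.card κ * minPermSum C := by
  obtain ⟨τ, hτ⟩ := exists_sum_eq_minPermSum C
  calc minPermSum (fun x y : κ × ι => C x.2 y.2)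
      ≤ ∑ x : κ × ι, C x.2 ((Equiv.refl κ).prodCongr τ x).2 := minPermSum_le _ _
    _ = Fintype.card κ * minPermSum C := by
      simp [Fintype.sum_prod_type, hτ]

theorem minPermSum_comp_snd (C : ι → ι → ℚ) :
    minPermSum (fun x y : κ × ι => C x.2 y.2) = Fintype.card κ * minPermSum C :=
  (minPermSum_comp_snd_le C).antisymm
    (le_minPermSum fun σ => card_mul_minPermSum_le C σ)

end MinPermSum

lemma exists_equiv_of_map_univ_eq {ι κ X : Type*} [Fintype ι] [Fintype κ] [DecidableEq X]
    {f : ι → X} {g : κ → X} (h : univ.val.map f = univ.val.map g) :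
    ∃ e : ι ≃ κ, ∀ i, g (e i) = f i := by
  have hcard : ∀ x, Fintype.card {i // f i = x} = Fintype.card {j // g j = x} := fun x => by
    simpa [Multiset.count_map, Fintype.card_subtype, eq_comm, Finset.card_def] using
      congrArg (Multiset.count x) h
  exact ⟨Equiv.ofFiberEquiv fun x => Fintype.equivOfCardEq (hcard x), Equiv.ofFiberEquiv_map _⟩

lemma map_listFn (S : Multiset (ℤ × ℤ)) : univ.val.map (listFn S) = S := by
  rw [Fin.univ_val_map, listFn, List.ofFn_get, Multiset.coe_toList]

lemma wt_add (a1 b1 a2 b2 : ℤ) (P P' : ℤ × ℤ) :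
    wt a1 b1 a2 b2 (P + P') = wt a1 b1 a2 b2 P + wt a1 b1 a2 b2 P' := by
  simp only [wt, Prod.fst_add, Prod.snd_add]
  push_cast
  ring

lemma wt_sub (a1 b1 a2 b2 : ℤ) (P P' : ℤ × ℤ) :
    wt a1 b1 a2 b2 (P - P') = wt a1 b1 a2 b2 P - wt a1 b1 a2 b2 P' := by
  simp only [wt, Prod.fst_sub, Prod.snd_sub]
  push_cast
  ring

lemma wt_zsmul (a1 b1 a2 b2 z : ℤ) (P : ℤ × ℤ) :
    wt a1 b1 a2 b2 (z • P) = z * wt a1 b1 a2 b2 P := by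
  simp only [wt, Prod.smul_fst, Prod.smul_snd, smul_eq_mul]
  push_cast
  ring

def h2Cost (p a1 b1 a2 b2 : ℤ) (P P' : ℤ × ℤ) : ℚ :=
  ⌈wt a1 b1 a2 b2 (p • P' - P)⌉ - wt a1 b1 a2 b2 (p • P' - P)

lemma h2Cost_add_add {p a1 b1 a2 b2 : ℤ} {Q Q' : ℤ × ℤ} (P P' : ℤ × ℤ)
    (hQ : ∃ z : ℤ, wt a1 b1 a2 b2 Q = z) (hQ' : ∃ z : ℤ, wt a1 b1 a2 b2 Q' = z) :
    h2Cost p a1 b1 a2 b2 (P + Q) (P' + Q') = h2Cost p a1 b1 a2 b2 P P' := by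
  obtain ⟨z, hz⟩ := hQ
  obtain ⟨z', hz'⟩ := hQ'
  have hshift : wt a1 b1 a2 b2 (p • (P' + Q') - (P + Q))
      = wt a1 b1 a2 b2 (p • P' - P) + ((p * z' - z : ℤ) : ℚ) := by
    simp only [smul_add, wt_add, wt_sub, wt_zsmul, hz, hz']
    push_cast
    ring
  simp only [h2Cost, hshift, Int.ceil_add_intCast]
  push_cast
  ring

lemma h2Min_eq_minPermSum (p a1 b1 a2 b2 : ℤ) {ι : Type*} [Fintype ι] [DecidableEq ι]
    {S : Multiset (ℤ × ℤ)} {f : ι → ℤ × ℤ} (hf : univ.val.map f = S) :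
    h2Min p a1 b1 a2 b2 S = minPermSum fun i j => h2Cost p a1 b1 a2 b2 (f i) (f j) := by
  obtain ⟨e, he⟩ := exists_equiv_of_map_univ_eq (hf.trans (map_listFn S).symm)
  rw [← minPermSum_comp_equiv _ e.symm]
  simp only [← he, Equiv.apply_symm_apply]
  rfl

lemma sum_map_univ_map_eq_map_univ_prod {ι κ X Y : Type*} [Fintype ι] [Fintype κ]
    (g : ι → X) (F : κ → X → Y) :
    ∑ j, (univ.val.map g).map (F j) = univ.val.map fun x : κ × ι => F x.1 (g x.2) := by
  rw [← univ_product_univ, Finset.product_val]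
  simp only [SProd.sprod, Multiset.product]
  rw [Multiset.map_bind]
  simp only [Multiset.bind, Multiset.join, Multiset.map_map, Finset.sum_eq_multiset_sum]
  rfl

theorem statement4_general (p a1 b1 a2 b2 : ℤ)
    (S2 : Finset (ℤ × ℤ))
    (k : ℕ) (Q : Fin k → ℤ × ℤ)
    (hQw : ∀ i, ∃ z : ℤ, wt a1 b1 a2 b2 (Q i) = z) :
    h2Min p a1 b1 a2 b2 (∑ i : Fin k, S2.val.map (fun P => P + Q i)) =
      (k : ℚ) * h2Min p a1 b1 a2 b2 S2.val := by
  have hS1 := sum_map_univ_map_eq_map_univ_prod (listFn S2.val) fun i P => P + Q i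
  rw [map_listFn] at hS1
  rw [h2Min_eq_minPermSum p a1 b1 a2 b2 hS1.symm,
    h2Min_eq_minPermSum p a1 b1 a2 b2 (map_listFn S2.val)]
  simp only [h2Cost_add_add _ _ (hQw _) (hQw _)]
  simpa using minPermSum_comp_snd (κ := Fin k) fun a b =>
    h2Cost p a1 b1 a2 b2 (listFn S2.val a) (listFn S2.val b)

/-- For a prime `p ∤ D`, a finite subset `S2` of `M(Δ)` and points
`Q1, ..., Qk` of `M(Δ)` with integer weights, the multiset
`S1 = (S2+Q1) ⊎ ... ⊎ (S2+Qk)` satisfies `h2(S1) = k·h2(S2)`. -/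
theorem statement4 (p a1 b1 a2 b2 : ℤ)
    (ha1 : 0 ≤ a1) (hb1 : 0 ≤ b1) (ha2 : 0 ≤ a2) (hb2 : 0 ≤ b2)
    (hD : 0 < a2 * b1 - a1 * b2)
    (hp : Prime p) (hpD : ¬ p ∣ (a2 * b1 - a1 * b2))
    (S2 : Finset (ℤ × ℤ)) (hS2 : (S2 : Set (ℤ × ℤ)) ⊆ MDelta a1 b1 a2 b2)
    (k : ℕ) (Q : Fin k → ℤ × ℤ)
    (hQmem : ∀ i, Q i ∈ MDelta a1 b1 a2 b2)
    (hQw : ∀ i, ∃ z : ℤ, wt a1 b1 a2 b2 (Q i) = z) :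
    h2Min p a1 b1 a2 b2 (∑ i : Fin k, S2.val.map (fun P => P + Q i)) =
      (k : ℚ) * h2Min p a1 b1 a2 b2 S2.val :=
  statement4_general p a1 b1 a2 b2 S2 k Q hQw
end
end

section
/- Let g := gcd(a1−a2, b1−b2) and let p be a prime with p ∤ D and p > 2*D/g + 1. Then for every integer k ≥ 1 and every integer i with 0 ≤ i ≤ x'_k − x_k, the minimum of h(S) over all subsets S ⊆ M(Δ) with #S = x_k + i equals h(T_k) + i*k*(p−1). -/
open Finset

noncomputable section

/-
Write `c(P, Q) = ⌈p w(Q) - w(P)⌉` for the cost of sending `P` to `Q`, so that `h(S)` is the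
cost of an optimal assignment `τ` of `S`. If `w(Q) ≥ k`, splicing `Q` out of its cycle of `τ`
saves at least `(p - 1) k`, because `⌈x⌉ + ⌈y⌉ ≥ ⌈x + y⌉` and the two edges through `Q` exceed
the shortcut by `(p - 1) w(Q)`; conversely `Q` can be added as a fixed point at cost
`c(Q, Q) = (p - 1) k` when `w(Q) = k`. Weights of lattice points differ by multiples of `g / D`,
so the bound on `p` gives `(p - 1)(w(Q) - w(P)) ≥ 2` whenever `w(P) < w(Q)`, and then replacing
`Q` by `P` never increases `h`. Hence among subsets of `M(Δ)` of a given size `≥ x_k`, the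
minimum of `h` is attained by `T_k` together with points of weight exactly `k`.
-/

section PermCost

variable {α ι ι' : Type*} (c : α → α → ℤ)

def CheaperThan (P Q : α) : Prop := c P P ≤ c Q Q ∧ ∀ a b, c a P + c P b ≤ c a Q + c Q b

def DetourAtLeast (Q : α) (κ : ℤ) : Prop := κ ≤ c Q Q ∧ ∀ a b, c a b + κ ≤ c a Q + c Q b

/- `Equiv.removeNone σ` splices `none` out of its cycle of `σ`: the preimage of `none` is sent
to `σ none`. -/
lemma optionElim_perm_some_of_ne_none (Q : α) (f : ι → α) {σ : Equiv.Perm (Option ι)} {i : ι}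
    (h : σ (some i) ≠ none) : Option.elim' Q f (σ (some i)) = f (Equiv.removeNone σ i) := by
  obtain ⟨j, hj⟩ := Option.ne_none_iff_exists'.mp h
  rw [← Equiv.removeNone_some σ ⟨j, hj⟩]
  rfl

lemma exists_apply_some_eq_none {σ : Equiv.Perm (Option ι)} (hσ : σ none ≠ none) :
    ∃ a, σ (some a) = none := by
  obtain ⟨a, ha⟩ := Option.ne_none_iff_exists'.mp (mt (Equiv.option_symm_apply_none_iff σ).mp hσ)
  exact ⟨a, by rw [← ha, Equiv.apply_symm_apply]⟩

variable [Fintype ι] [Fintype ι']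

def permCost (f : ι → α) (τ : Equiv.Perm ι) : ℤ := ∑ i, c (f i) (f (τ i))

lemma permCost_comp_equiv (e : ι' ≃ ι) (f : ι → α) (τ : Equiv.Perm ι') :
    permCost c (f ∘ e) τ = permCost c f (e.permCongr τ) :=
  Fintype.sum_equiv e _ _ fun i => by simp

lemma permCost_optionElim_of_none (Q : α) (f : ι → α) {σ : Equiv.Perm (Option ι)}
    (hσ : σ none = none) :
    permCost c (Option.elim' Q f) σ = c Q Q + permCost c f (Equiv.removeNone σ) := by
  rw [permCost, Fintype.sum_option, hσ]
  congr 1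
  refine Fintype.sum_congr _ _ fun i => ?_
  rw [optionElim_perm_some_of_ne_none Q f (hσ ▸ σ.injective.ne (Option.some_ne_none i))]
  rfl

lemma permCost_optionElim_of_some (Q : α) (f : ι → α) {σ : Equiv.Perm (Option ι)} {a : ι}
    (ha : σ (some a) = none) :
    permCost c (Option.elim' Q f) σ + c (f a) (f (Equiv.removeNone σ a)) =
      permCost c f (Equiv.removeNone σ) + c (f a) Q + c Q (f (Equiv.removeNone σ a)) := by
  set τ := Equiv.removeNone σ
  have hnone : σ none = some (τ a) := (Equiv.removeNone_none σ ha).symm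
  have hdiff : ∑ i, (c (f i) (Option.elim' Q f (σ (some i))) - c (f i) (f (τ i))) =
      c (f a) Q - c (f a) (f (τ a)) := by
    rw [Fintype.sum_eq_single a fun i hi => ?_, ha]
    · rfl
    rw [optionElim_perm_some_of_ne_none Q f (ha ▸ σ.injective.ne (by simpa using hi)), sub_self]
  rw [permCost, permCost, Fintype.sum_option, hnone]
  rw [sum_sub_distrib] at hdiff
  simp only [Option.elim'_none, Option.elim'_some]
  linarith

variable [DecidableEq ι] [DecidableEq ι']

def minPermCost (f : ι → α) : ℤ := univ.inf' univ_nonempty (permCost c f)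

lemma minPermCost_le (f : ι → α) (τ : Equiv.Perm ι) : minPermCost c f ≤ permCost c f τ :=
  inf'_le _ (mem_univ τ)

lemma exists_permCost_eq_minPermCost (f : ι → α) : ∃ τ, permCost c f τ = minPermCost c f := by
  obtain ⟨τ, -, h⟩ := exists_mem_eq_inf' univ_nonempty (permCost c f)
  exact ⟨τ, h.symm⟩

lemma minPermCost_comp_equiv (e : ι' ≃ ι) (f : ι → α) :
    minPermCost c (f ∘ e) = minPermCost c f := by
  apply le_antisymm
  · obtain ⟨τ, hτ⟩ := exists_permCost_eq_minPermCost c f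
    calc minPermCost c (f ∘ e) ≤ permCost c (f ∘ e) (e.permCongr.symm τ) := minPermCost_le ..
      _ = minPermCost c f := by rw [permCost_comp_equiv, Equiv.apply_symm_apply, hτ]
  · obtain ⟨τ, hτ⟩ := exists_permCost_eq_minPermCost c (f ∘ e)
    rw [← hτ, permCost_comp_equiv]
    exact minPermCost_le ..

variable (f : ι → α)

lemma minPermCost_optionElim_le (Q : α) :
    minPermCost c (Option.elim' Q f) ≤ minPermCost c f + c Q Q := by
  obtain ⟨τ, hτ⟩ := exists_permCost_eq_minPermCost c f
  calc minPermCost c (Option.elim' Q f)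
      ≤ permCost c (Option.elim' Q f) τ.optionCongr := minPermCost_le ..
    _ = minPermCost c f + c Q Q := by
      rw [permCost_optionElim_of_none c Q f (by simp), Equiv.removeNone_optionCongr, hτ, add_comm]

lemma minPermCost_add_le_optionElim {Q : α} {κ : ℤ} (hQ : DetourAtLeast c Q κ) :
    minPermCost c f + κ ≤ minPermCost c (Option.elim' Q f) := by
  obtain ⟨σ, hσ⟩ := exists_permCost_eq_minPermCost c (Option.elim' Q f)
  have hmin := minPermCost_le c f (Equiv.removeNone σ)
  rw [← hσ]
  by_cases h : σ none = none
  · rw [permCost_optionElim_of_none c Q f h]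
    linarith [hQ.1]
  · obtain ⟨a, ha⟩ := exists_apply_some_eq_none h
    have := permCost_optionElim_of_some c Q f ha
    linarith [hQ.2 (f a) (f (Equiv.removeNone σ a))]

lemma minPermCost_optionElim_mono {P Q : α} (hPQ : CheaperThan c P Q) :
    minPermCost c (Option.elim' P f) ≤ minPermCost c (Option.elim' Q f) := by
  obtain ⟨σ, hσ⟩ := exists_permCost_eq_minPermCost c (Option.elim' Q f)
  refine (minPermCost_le c _ σ).trans (hσ ▸ ?_)
  by_cases h : σ none = none
  · rw [permCost_optionElim_of_none c P f h, permCost_optionElim_of_none c Q f h]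
    linarith [hPQ.1]
  · obtain ⟨a, ha⟩ := exists_apply_some_eq_none h
    have hP := permCost_optionElim_of_some c P f ha
    have hQ := permCost_optionElim_of_some c Q f ha
    linarith [hPQ.2 (f a) (f (Equiv.removeNone σ a))]

end PermCost

section FinsetCost

variable {α : Type*} [DecidableEq α] (c : α → α → ℤ)

def minCostOn (S : Finset α) : ℤ := minPermCost c ((↑) : S → α)

variable {S : Finset α} {P Q : α}

lemma minCostOn_insert (hQ : Q ∉ S) :
    minCostOn c (insert Q S) = minPermCost c (Option.elim' Q ((↑) : S → α)) := by
  rw [minCostOn, ← minPermCost_comp_equiv c (subtypeInsertEquivOption hQ).symm]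
  congr 1
  funext o
  cases o <;> rfl

lemma minCostOn_insert_le (hQ : Q ∉ S) : minCostOn c (insert Q S) ≤ minCostOn c S + c Q Q := by
  rw [minCostOn_insert c hQ]
  exact minPermCost_optionElim_le ..

lemma minCostOn_add_le_insert {κ : ℤ} (hQ : Q ∉ S) (hQκ : DetourAtLeast c Q κ) :
    minCostOn c S + κ ≤ minCostOn c (insert Q S) := by
  rw [minCostOn_insert c hQ]
  exact minPermCost_add_le_optionElim _ _ hQκ

lemma minCostOn_insert_le_insert (hP : P ∉ S) (hQ : Q ∉ S) (hPQ : CheaperThan c P Q) :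
    minCostOn c (insert P S) ≤ minCostOn c (insert Q S) := by
  rw [minCostOn_insert c hP, minCostOn_insert c hQ]
  exact minPermCost_optionElim_mono _ _ hPQ

theorem add_le_minCostOn {M : Set α} {T : Finset α} {κ : ℤ} (hTM : ↑T ⊆ M)
    (hcheap : ∀ P ∈ T, ∀ Q ∈ M, Q ∉ T → CheaperThan c P Q)
    (hdetour : ∀ Q ∈ M, Q ∉ T → DetourAtLeast c Q κ) (hSM : ↑S ⊆ M) {i : ℕ}
    (hcard : #S = #T + i) : minCostOn c T + i * κ ≤ minCostOn c S := by
  obtain ⟨n, hn⟩ : ∃ n, #(S \ T) = n := ⟨_, rfl⟩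
  induction n generalizing S i with
  | zero =>
    have hST : S ⊆ T := sdiff_eq_empty_iff_subset.mp (card_eq_zero.mp hn)
    obtain rfl : i = 0 := by have := card_le_card hST; omega
    rw [eq_of_subset_of_card_le hST (by omega)]
    simp
  | succ n ih =>
    obtain ⟨Q, hQ⟩ : (S \ T).Nonempty := card_pos.mp (by omega)
    obtain ⟨hQS, hQT⟩ := mem_sdiff.mp hQ
    have hQM : Q ∈ M := hSM hQS
    have hS : insert Q (S.erase Q) = S := insert_erase hQS
    have hQS' : Q ∉ S.erase Q := notMem_erase Q S
    have hS'M : ↑(S.erase Q) ⊆ M := (coe_subset.mpr (erase_subset Q S)).trans hSM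
    have hS'card : #(S.erase Q) + 1 = #S := card_erase_add_one hQS
    have hn' : #(S.erase Q \ T) = n := by
      rw [erase_sdiff_comm, card_erase_of_mem hQ, hn, Nat.add_sub_cancel]
    rcases (T \ S).eq_empty_or_nonempty with hTS | ⟨P, hP⟩
    · have hTS : T ⊆ S.erase Q :=
        fun x hx => mem_erase.mpr ⟨fun h => hQT (h ▸ hx), sdiff_eq_empty_iff_subset.mp hTS hx⟩
      obtain ⟨j, rfl⟩ : ∃ j, i = j + 1 := ⟨i - 1, by have := card_le_card hTS; omega⟩
      have hrec := ih hS'M (i := j) (by omega) hn'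
      have hstep := minCostOn_add_le_insert c hQS' (hdetour Q hQM hQT)
      rw [hS] at hstep
      push_cast
      linarith
    · obtain ⟨hPT, hPS⟩ := mem_sdiff.mp hP
      have hPS' : P ∉ S.erase Q := fun h => hPS (mem_of_mem_erase h)
      have hrec := ih (S := insert P (S.erase Q)) (i := i)
        (by rw [coe_insert]; exact Set.insert_subset (hTM hPT) hS'M)
        (by rw [card_insert_of_notMem hPS']; omega)
        (by rw [insert_sdiff_of_mem _ hPT, hn'])
      have hstep := minCostOn_insert_le_insert c hPS' hQS' (hcheap P hPT Q hQM hQT)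
      rw [hS] at hstep
      linarith

theorem minCostOn_union_le {T B : Finset α} (hTB : Disjoint T B) {κ : ℤ}
    (hB : ∀ Q ∈ B, c Q Q ≤ κ) : minCostOn c (T ∪ B) ≤ minCostOn c T + #B * κ := by
  induction B using Finset.induction_on with
  | empty => simp
  | insert Q B hQB ih =>
    have hQ : Q ∉ T ∪ B := by
      simpa [hQB] using disjoint_right.mp hTB (mem_insert_self Q B)
    have hstep := minCostOn_insert_le c hQ
    have hrec := ih (hTB.mono_right (subset_insert Q B)) fun R hR => hB R (mem_insert_of_mem hR)
    have hQκ := hB Q (mem_insert_self Q B)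
    rw [union_insert, card_insert_of_notMem hQB]
    push_cast
    linarith

theorem isLeast_minCostOn {M : Set α} {T T' : Finset α} {κ : ℤ} (hTM : ↑T ⊆ M) (hT'M : ↑T' ⊆ M)
    (hcheap : ∀ P ∈ T, ∀ Q ∈ M, Q ∉ T → CheaperThan c P Q)
    (hdetour : ∀ Q ∈ M, Q ∉ T → DetourAtLeast c Q κ) (hbdry : ∀ Q ∈ T', Q ∉ T → c Q Q ≤ κ)
    {i : ℕ} (hi : i ≤ #T' - #T) :
    IsLeast {h | ∃ S : Finset α, ↑S ⊆ M ∧ #S = #T + i ∧ h = minCostOn c S}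
      (minCostOn c T + i * κ) := by
  obtain ⟨B, hB, hBcard⟩ := exists_subset_card_eq (hi.trans (le_card_sdiff T T'))
  have hTB : Disjoint T B := disjoint_of_subset_right hB disjoint_sdiff
  have hSM : ↑(T ∪ B) ⊆ M := by
    rw [coe_union]
    exact Set.union_subset hTM ((coe_subset.mpr (hB.trans sdiff_subset)).trans hT'M)
  have hcard : #(T ∪ B) = #T + i := by rw [card_union_of_disjoint hTB, hBcard]
  refine ⟨⟨T ∪ B, hSM, hcard, le_antisymm (add_le_minCostOn c hTM hcheap hdetour hSM hcard) ?_⟩,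
    ?_⟩
  · exact hBcard ▸ minCostOn_union_le c hTB fun Q hQ => hbdry Q (mem_sdiff.mp (hB hQ)).1
      (mem_sdiff.mp (hB hQ)).2
  · rintro _ ⟨S, hSM, hS, rfl⟩
    exact add_le_minCostOn c hTM hcheap hdetour hSM hS

end FinsetCost

section CeilCost

variable {α K : Type*} [Field K] [LinearOrder K] [IsStrictOrderedRing K] [FloorRing K]

def ceilCost (p : ℤ) (w : α → K) (P Q : α) : ℤ := ⌈p * w Q - w P⌉

variable {p : ℤ} {w : α → K} {P Q : α}

lemma ceilCost_self_of_eq {k : ℤ} (hQ : w Q = k) : ceilCost p w Q Q = (p - 1) * k := by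
  rw [ceilCost, hQ, show (p : K) * k - k = ((p - 1) * k : ℤ) by push_cast; ring, Int.ceil_intCast]

lemma detourAtLeast_ceilCost (hp : 1 ≤ p) {k : ℤ} (hQ : k ≤ w Q) :
    DetourAtLeast (ceilCost p w) Q ((p - 1) * k) := by
  have hk : ((p - 1 : ℤ) : K) * k ≤ (p - 1 : ℤ) * w Q :=
    mul_le_mul_of_nonneg_left hQ (by exact_mod_cast sub_nonneg.mpr hp)
  push_cast at hk
  refine ⟨?_, fun a b => ?_⟩
  · rw [ceilCost, ← Int.ceil_intCast (R := K) ((p - 1) * k)]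
    exact Int.ceil_le_ceil (by push_cast; linarith)
  · calc ceilCost p w a b + (p - 1) * k = ⌈p * w b - w a + ((p - 1) * k : ℤ)⌉ :=
          (Int.ceil_add_intCast ..).symm
      _ ≤ ⌈(p * w Q - w a) + (p * w b - w Q)⌉ := Int.ceil_le_ceil (by push_cast; linarith)
      _ ≤ ceilCost p w a Q + ceilCost p w Q b := Int.ceil_add_le ..

lemma cheaperThan_ceilCost (h : 2 ≤ (p - 1) * (w Q - w P)) : CheaperThan (ceilCost p w) P Q := by
  refine ⟨Int.ceil_le_ceil (by linarith), fun a b => ?_⟩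
  set d := w Q - w P
  have hd : ⌈d⌉ ≤ ⌊p * d⌋ := by
    have : (⌈d⌉ : K) < ⌊p * d⌋ := by
      linarith [Int.ceil_lt_add_one d, Int.sub_one_lt_floor (p * d)]
    exact_mod_cast this.le
  have hPQ : ceilCost p w a P + ⌊p * d⌋ ≤ ceilCost p w a Q := by
    rw [ceilCost, ← Int.ceil_add_intCast]
    exact Int.ceil_le_ceil (by linarith [Int.floor_le (p * d)])
  have hQP : ceilCost p w P b ≤ ceilCost p w Q b + ⌈d⌉ :=
    (Int.ceil_le_ceil (by linarith)).trans (Int.ceil_add_le ((p : K) * w b - w Q) d)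
  linarith

end CeilCost

lemma wt_zsmul_sub (a1 b1 a2 b2 p : ℤ) (P Q : ℤ × ℤ) :
    wt a1 b1 a2 b2 (p • Q - P) = p * wt a1 b1 a2 b2 Q - wt a1 b1 a2 b2 P := by
  simp only [wt, Prod.fst_sub, Prod.snd_sub, Prod.smul_fst, Prod.smul_snd, smul_eq_mul]
  push_cast
  ring

lemma hMin_val_eq_minCostOn (p a1 b1 a2 b2 : ℤ) (S : Finset (ℤ × ℤ)) :
    hMin p a1 b1 a2 b2 S.val = minCostOn (ceilCost p (wt a1 b1 a2 b2)) S := by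
  let e : Fin S.val.toList.length ≃ S :=
    (List.Nodup.getEquiv _ S.nodup_toList).trans (Equiv.subtypeEquivRight fun x => by simp)
  rw [minCostOn, ← minPermCost_comp_equiv _ e]
  simp only [hMin, hTau, wt_zsmul_sub]
  rfl

lemma two_le_mul_wt_sub {p a1 b1 a2 b2 : ℤ} (hD : 0 < a2 * b1 - a1 * b2)
    (hpg : 2 * ((a2 * b1 - a1 * b2 : ℤ) : ℚ) / (Int.gcd (a1 - a2) (b1 - b2) : ℚ) + 1 < (p : ℚ))
    {P Q : ℤ × ℤ} (h : wt a1 b1 a2 b2 P < wt a1 b1 a2 b2 Q) :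
    2 ≤ (p - 1) * (wt a1 b1 a2 b2 Q - wt a1 b1 a2 b2 P) := by
  set D := a2 * b1 - a1 * b2
  set g := Int.gcd (a1 - a2) (b1 - b2)
  set n : ℤ × ℤ → ℤ := fun X => (b1 - b2) * X.1 + (a2 - a1) * X.2
  have hDq : (0 : ℚ) < D := by exact_mod_cast hD
  have hg : (0 : ℚ) < g := by
    refine Nat.cast_pos.mpr (Int.gcd_pos_iff.mpr ?_)
    by_contra! h
    have : D = 0 := by grind
    omega
  have hlt : n P < n Q := by
    have h' : (n P : ℚ) / D < n Q / D := h
    exact_mod_cast (div_lt_div_iff_of_pos_right hDq).mp h'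
  have hdvd : (g : ℤ) ∣ n Q - n P := by
    have h1 : (g : ℤ) ∣ b1 - b2 := Int.gcd_dvd_right ..
    have h2 : (g : ℤ) ∣ a2 - a1 := dvd_sub_comm.mp (Int.gcd_dvd_left ..)
    rw [show n Q - n P = (b1 - b2) * (Q.1 - P.1) + (a2 - a1) * (Q.2 - P.2) by ring]
    exact dvd_add (h1.mul_right _) (h2.mul_right _)
  have hgap : (g : ℚ) ≤ n Q - n P := by exact_mod_cast Int.le_of_dvd (by omega) hdvd
  have hpg' : 2 * (D : ℚ) < (p - 1) * g := by
    have := (div_lt_iff₀ hg).mp (by linarith : 2 * (D : ℚ) / g < p - 1)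
    linarith
  have hwt : wt a1 b1 a2 b2 Q - wt a1 b1 a2 b2 P = ((n Q : ℚ) - n P) / D := by
    simp only [wt, n, D, sub_div]
  rw [hwt, mul_div_assoc', le_div_iff₀ hDq]
  nlinarith

theorem statement11_general (p a1 b1 a2 b2 : ℤ)
    (hD : 0 < a2 * b1 - a1 * b2)
    (hpg : 2 * ((a2 * b1 - a1 * b2 : ℤ) : ℚ) /
      (Int.gcd (a1 - a2) (b1 - b2) : ℚ) + 1 < (p : ℚ))
    (k : ℕ)
    (Tk T'k : Finset (ℤ × ℤ))
    (hTk : (Tk : Set (ℤ × ℤ)) =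
      {P ∈ MDelta a1 b1 a2 b2 | wt a1 b1 a2 b2 P < (k : ℚ)})
    (hT'k : (T'k : Set (ℤ × ℤ)) =
      {P ∈ MDelta a1 b1 a2 b2 | wt a1 b1 a2 b2 P ≤ (k : ℚ)})
    (i : ℕ) (hi : i ≤ T'k.card - Tk.card) :
    IsLeast {h : ℤ | ∃ S : Finset (ℤ × ℤ),
        (S : Set (ℤ × ℤ)) ⊆ MDelta a1 b1 a2 b2 ∧ S.card = Tk.card + i ∧
        h = hMin p a1 b1 a2 b2 S.val}
      (hMin p a1 b1 a2 b2 Tk.val + (i : ℤ) * (k : ℤ) * (p - 1)) := by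
  have hp : 1 ≤ p := by
    have hD' : (0 : ℚ) ≤ 2 * ((a2 * b1 - a1 * b2 : ℤ) : ℚ) := by exact_mod_cast (by omega)
    have := div_nonneg hD' (Nat.cast_nonneg (α := ℚ) (Int.gcd (a1 - a2) (b1 - b2)))
    exact_mod_cast (by linarith : (1 : ℚ) ≤ p)
  have hT : ∀ P, P ∈ Tk ↔ P ∈ MDelta a1 b1 a2 b2 ∧ wt a1 b1 a2 b2 P < k := fun P => by
    rw [← mem_coe, hTk]; rfl
  have hT' : ∀ P, P ∈ T'k ↔ P ∈ MDelta a1 b1 a2 b2 ∧ wt a1 b1 a2 b2 P ≤ k := fun P => by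
    rw [← mem_coe, hT'k]; rfl
  have hout : ∀ Q ∈ MDelta a1 b1 a2 b2, Q ∉ Tk → ((k : ℤ) : ℚ) ≤ wt a1 b1 a2 b2 Q :=
    fun Q hQM hQT => by exact_mod_cast not_lt.mp fun h => hQT ((hT Q).2 ⟨hQM, h⟩)
  simp only [hMin_val_eq_minCostOn]
  rw [show (i : ℤ) * k * (p - 1) = i * ((p - 1) * (k : ℤ)) by ring]
  refine isLeast_minCostOn _ (fun P hP => ((hT P).1 hP).1) (fun P hP => ((hT' P).1 hP).1)
    (fun P hP Q hQM hQT => cheaperThan_ceilCost (two_le_mul_wt_sub hD hpg ?_))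
    (fun Q hQM hQT => detourAtLeast_ceilCost hp (hout Q hQM hQT))
    (fun Q hQ hQT => (ceilCost_self_of_eq (le_antisymm ?_ (hout Q ((hT' Q).1 hQ).1 hQT))).le) hi
  · exact ((hT P).1 hP).2.trans_le (by exact_mod_cast hout Q hQM hQT)
  · exact_mod_cast ((hT' Q).1 hQ).2

/-- Let `g = gcd(a1-a2, b1-b2)` and `p` a prime with `p ∤ D` and
`p > 2·D/g + 1`.  For every `k ≥ 1` and `0 ≤ i ≤ x'_k - x_k`, the minimum of
`h(S)` over subsets `S ⊆ M(Δ)` with `#S = x_k + i` equals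
`h(T_k) + i·k·(p-1)`. -/
theorem statement11 (p a1 b1 a2 b2 : ℤ)
    (ha1 : 0 ≤ a1) (hb1 : 0 ≤ b1) (ha2 : 0 ≤ a2) (hb2 : 0 ≤ b2)
    (hD : 0 < a2 * b1 - a1 * b2)
    (hp : Prime p) (hpD : ¬ p ∣ (a2 * b1 - a1 * b2))
    (hpg : 2 * ((a2 * b1 - a1 * b2 : ℤ) : ℚ) /
      (Int.gcd (a1 - a2) (b1 - b2) : ℚ) + 1 < (p : ℚ))
    (k : ℕ) (hk : 1 ≤ k)
    (Tk T'k : Finset (ℤ × ℤ))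
    (hTk : (Tk : Set (ℤ × ℤ)) =
      {P ∈ MDelta a1 b1 a2 b2 | wt a1 b1 a2 b2 P < (k : ℚ)})
    (hT'k : (T'k : Set (ℤ × ℤ)) =
      {P ∈ MDelta a1 b1 a2 b2 | wt a1 b1 a2 b2 P ≤ (k : ℚ)})
    (i : ℕ) (hi : i ≤ T'k.card - Tk.card) :
    IsLeast {h : ℤ | ∃ S : Finset (ℤ × ℤ),
        (S : Set (ℤ × ℤ)) ⊆ MDelta a1 b1 a2 b2 ∧ S.card = Tk.card + i ∧
        h = hMin p a1 b1 a2 b2 S.val}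
      (hMin p a1 b1 a2 b2 Tk.val + (i : ℤ) * (k : ℤ) * (p - 1)) :=
  statement11_general p a1 b1 a2 b2 hD hpg k Tk T'k hTk hT'k i hi
end
end

section
/- Let g := gcd(a1−a2, b1−b2) and let p be a prime with p ∤ D and p > 2*D/g + 1. For ℓ ≥ 0, let m(ℓ) := min{h(S) : S ⊆ M(Δ), #S = ℓ}. Then for every k ≥ 1 the points (x_k, h(T_k)) and (x'_k, h(T'_k)) are vertices of the lower convex hull of the set {(ℓ, m(ℓ)) : ℓ ≥ 0}; explicitly, for all integers ℓ1, ℓ2 with ℓ1 < x_k < ℓ2 one has (ℓ2 − x_k)*m(ℓ1) + (x_k − ℓ1)*m(ℓ2) > (ℓ2 − ℓ1)*h(T_k), and for all ℓ1 < x'_k < ℓ2 one has (ℓ2 − x'_k)*m(ℓ1) + (x'_k − ℓ1)*m(ℓ2) > (ℓ2 − ℓ1)*h(T'_k). -/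
open Finset

noncomputable section

/-!
Since `w(p·Q − P) = p·w(Q) − w(P)`, for a finite set `S` and any permutation the sum of the ceilings
is `(p − 1)·W(S)` plus the sum of the round-up defects, where `W(S)` is the total weight; hence
`h(S) = (p − 1)·W(S) + h2(S)`. All weights lie in `(1/d)ℤ` with `d = D/g`, so every defect lies in
`[0, 1 − 1/d]`, and adding or deleting one point moves `h2` by at most `1 − 1/d`.

If every point of `T` has weight `≤ t` and every other point of `M(Δ)` has weight `≥ t + 1/d`
(true for `T_k` and `T'_k`), exchanging the points of `S` and `T` one at a time gives
`h(S) ≥ h(T) + μ·(#S − #T)` for every slope `μ` from `(p − 1)·t + (1 − 1/d)` to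
`(p − 1)·(t + 1/d) − (1 − 1/d)`. The two extreme slopes differ by `(p + 1 − 2d)/d > 0`, so the point
`(#T, h(T))` lies strictly below every chord of the points `(ℓ, m(ℓ))` across it.
-/

section PermMin

variable {ι κ α R : Type*} [Fintype ι] [DecidableEq ι] [Fintype κ] [DecidableEq κ] [DecidableEq α]

def permMin [LinearOrder R] [AddCommMonoid R] (c : ι → ι → R) : R :=
  Finset.univ.inf' (Finset.univ_nonempty_iff.mpr ⟨1⟩) fun σ : Equiv.Perm ι => ∑ i, c i (σ i)

section AddCommMonoid

variable [LinearOrder R] [AddCommMonoid R]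

theorem permMin_le (c : ι → ι → R) (σ : Equiv.Perm ι) : permMin c ≤ ∑ i, c i (σ i) :=
  Finset.inf'_le _ (Finset.mem_univ σ)

theorem le_permMin {c : ι → ι → R} {a : R} (h : ∀ σ : Equiv.Perm ι, a ≤ ∑ i, c i (σ i)) :
    a ≤ permMin c :=
  Finset.le_inf' _ _ fun σ _ => h σ

theorem permMin_le_comp_equiv (c : ι → ι → R) (e : κ ≃ ι) :
    permMin c ≤ permMin fun i j => c (e i) (e j) :=
  le_permMin fun τ => by
    calc permMin c ≤ ∑ i, c i ((e.symm.trans (τ.trans e)) i) := permMin_le c _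
      _ = ∑ k, c (e k) (e (τ k)) := by
        rw [← e.sum_comp]; simp

theorem permMin_comp_equiv (c : ι → ι → R) (e : κ ≃ ι) :
    (permMin fun i j => c (e i) (e j)) = permMin c := by
  refine le_antisymm ?_ (permMin_le_comp_equiv c e)
  simpa using permMin_le_comp_equiv (fun i j => c (e i) (e j)) e.symm

theorem map_permMin {R' : Type*} [LinearOrder R'] [AddCommMonoid R'] (f : R →+ R') (hf : Monotone f)
    (c : ι → ι → R) : f (permMin c) = permMin fun i j => f (c i j) := by
  rw [permMin, Finset.apply_inf'_eq_inf'_comp _ _ fun _ _ => hf.map_min]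
  simp [permMin, map_sum]

def permMinOn (c : α → α → R) (S : Finset α) : R := permMin fun x y : S => c x y

theorem permMinOn_insert {c : α → α → R} {S : Finset α} {a : α} (ha : a ∉ S) :
    permMinOn c (insert a S) = permMin fun o o' : Option S =>
      c ((Finset.subtypeInsertEquivOption ha).symm o)
        ((Finset.subtypeInsertEquivOption ha).symm o') :=
  (permMin_comp_equiv _ _).symm

end AddCommMonoid

variable [AddCommGroup R] [LinearOrder R] [IsOrderedAddMonoid R]

theorem permMin_add_sub (c : ι → ι → R) (u v : ι → R) :
    (permMin fun i j => c i j + u j - v i) = permMin c + (∑ i, u i - ∑ i, v i) := by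
  have hsum (σ : Equiv.Perm ι) :
      ∑ i, (c i (σ i) + u (σ i) - v i) = ∑ i, c i (σ i) + (∑ i, u i - ∑ i, v i) := by
    rw [Finset.sum_sub_distrib, Finset.sum_add_distrib, Equiv.sum_comp σ u, add_sub_assoc]
  rw [permMin, permMin, Finset.apply_inf'_eq_inf'_comp _ (· + (∑ i, u i - ∑ i, v i))
    fun _ _ => (min_add_add_right _ _ _).symm]
  exact Finset.inf'_congr _ rfl fun σ _ => hsum σ

theorem permMin_option_le (c : Option ι → Option ι → R) {C : R} (hC : c none none ≤ C) :
    permMin c ≤ (permMin fun i j => c (some i) (some j)) + C := by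
  obtain ⟨τ, -, hτ⟩ := Finset.exists_mem_eq_inf' (Finset.univ_nonempty_iff.mpr ⟨1⟩)
    fun τ : Equiv.Perm ι => ∑ i, c (some i) (some (τ i))
  calc permMin c ≤ ∑ o, c o (Equiv.optionCongr τ o) := permMin_le c _
    _ = c none none + ∑ i, c (some i) (some (τ i)) := Fintype.sum_option _
    _ ≤ _ := by rw [permMin, hτ, add_comm]; gcongr

theorem permMin_some_le (c : Option ι → Option ι → R) {C : R} (h0 : ∀ o o', 0 ≤ c o o')
    (hC : ∀ o o', c o o' ≤ C) :
    (permMin fun i j => c (some i) (some j)) ≤ permMin c + C := by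
  obtain ⟨σ, -, hσ⟩ := Finset.exists_mem_eq_inf' (Finset.univ_nonempty_iff.mpr ⟨1⟩)
    fun σ : Equiv.Perm (Option ι) => ∑ o, c o (σ o)
  -- `σ.removeNone` sends the one `i` with `σ (some i) = none` to `σ none` instead: only that
  -- term changes, by at most `C`.
  have hterm (i : ι) : c (some i) (some (σ.removeNone i)) ≤
      c (some i) (σ (some i)) + if σ.symm none = some i then C else 0 := by
    by_cases hi : σ (some i) = none
    · rw [Equiv.removeNone_none σ hi, if_pos (by rw [← hi, Equiv.symm_apply_apply])]
      exact le_add_of_nonneg_of_le (h0 _ _) (hC _ _)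
    · obtain ⟨y, hy⟩ := Option.ne_none_iff_exists'.mp hi
      rw [Equiv.removeNone_some σ ⟨y, hy⟩, if_neg (by rw [σ.symm_apply_eq, hy]; simp)]
      simp
  have hextra : ∑ i : ι, (if σ.symm none = some i then C else 0) ≤ C := by
    calc ∑ i : ι, (if σ.symm none = some i then C else 0)
        ≤ ∑ o, if σ.symm none = o then C else 0 := by
          rw [Fintype.sum_option]
          exact le_add_of_nonneg_left (by split_ifs <;> simp [(h0 none none).trans (hC _ _)])
      _ = C := Fintype.sum_ite_eq _ _
  calc (permMin fun i j => c (some i) (some j)) ≤ ∑ i, c (some i) (some (σ.removeNone i)) :=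
        permMin_le _ _
    _ ≤ ∑ i, c (some i) (σ (some i)) + C := by
        refine (Finset.sum_le_sum fun i _ => hterm i).trans ?_
        rw [Finset.sum_add_distrib]
        gcongr
    _ ≤ ∑ o, c o (σ o) + C := by
        rw [Fintype.sum_option]
        gcongr
        exact le_add_of_nonneg_left (h0 _ _)
    _ = permMin c + C := by rw [permMin, hσ]

variable {c : α → α → R} {C : R}

theorem permMinOn_insert_le {S : Finset α} {a : α} (ha : a ∉ S) (hC : c a a ≤ C) :
    permMinOn c (insert a S) ≤ permMinOn c S + C := by
  rw [permMinOn_insert ha]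
  exact permMin_option_le (fun o o' => c ((Finset.subtypeInsertEquivOption ha).symm o)
    ((Finset.subtypeInsertEquivOption ha).symm o')) hC

theorem permMinOn_le_insert (h0 : ∀ x y, 0 ≤ c x y) (hC : ∀ x y, c x y ≤ C) {S : Finset α} {a : α}
    (ha : a ∉ S) : permMinOn c S ≤ permMinOn c (insert a S) + C := by
  rw [permMinOn_insert ha]
  exact permMin_some_le (fun o o' => c ((Finset.subtypeInsertEquivOption ha).symm o)
    ((Finset.subtypeInsertEquivOption ha).symm o')) (fun _ _ => h0 _ _) fun _ _ => hC _ _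

theorem permMinOn_union_le (hC : ∀ x y, c x y ≤ C) {U S : Finset α} (hUS : Disjoint U S) :
    permMinOn c (U ∪ S) ≤ permMinOn c S + #U • C := by
  induction U using Finset.induction_on with
  | empty => simp
  | insert a U ha ih =>
    rw [Finset.disjoint_insert_left] at hUS
    rw [Finset.insert_union, Finset.card_insert_of_notMem ha, succ_nsmul, ← add_assoc]
    have haUS : a ∉ U ∪ S := by simp [ha, hUS.1]
    exact (permMinOn_insert_le haUS (hC a a)).trans (by gcongr; exact ih hUS.2)

theorem permMinOn_le_union (h0 : ∀ x y, 0 ≤ c x y) (hC : ∀ x y, c x y ≤ C) {U S : Finset α}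
    (hUS : Disjoint U S) : permMinOn c S ≤ permMinOn c (U ∪ S) + #U • C := by
  induction U using Finset.induction_on with
  | empty => simp
  | insert a U ha ih =>
    rw [Finset.disjoint_insert_left] at hUS
    rw [Finset.insert_union, Finset.card_insert_of_notMem ha, succ_nsmul, ← add_assoc]
    have haUS : a ∉ U ∪ S := by simp [ha, hUS.1]
    calc permMinOn c S ≤ permMinOn c (U ∪ S) + #U • C := ih hUS.2
      _ ≤ permMinOn c (insert a (U ∪ S)) + C + #U • C := by
        gcongr; exact permMinOn_le_insert h0 hC haUS
      _ = permMinOn c (insert a (U ∪ S)) + #U • C + C := add_right_comm _ _ _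

theorem permMinOn_le_add_card_sdiff (h0 : ∀ x y, 0 ≤ c x y) (hC : ∀ x y, c x y ≤ C)
    (S T : Finset α) : permMinOn c T ≤ permMinOn c S + (#(T \ S) + #(S \ T)) • C := by
  calc permMinOn c T = permMinOn c (T \ S ∪ T ∩ S) := by rw [Finset.sdiff_union_inter]
    _ ≤ permMinOn c (T ∩ S) + #(T \ S) • C :=
      permMinOn_union_le hC (Finset.disjoint_sdiff_inter T S)
    _ ≤ permMinOn c (S \ T ∪ S ∩ T) + #(S \ T) • C + #(T \ S) • C := by
      rw [Finset.inter_comm]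
      gcongr
      exact permMinOn_le_union h0 hC (Finset.disjoint_sdiff_inter S T)
    _ = permMinOn c S + (#(T \ S) + #(S \ T)) • C := by
      rw [Finset.sdiff_union_inter, add_nsmul, add_assoc, add_comm (#(S \ T) • C)]

end PermMin

section OrderedField

variable {K : Type*} [Field K] [LinearOrder K] [IsStrictOrderedRing K]

theorem ceil_intCast_div_sub_le [FloorRing K] {z d : ℤ} (hd : 0 < d) :
    (⌈(z / d : K)⌉ : K) - z / d ≤ 1 - 1 / d := by
  have hdK : (0 : K) < d := by exact_mod_cast hd
  have hlt : (⌈(z / d : K)⌉ * d : K) < z + d := by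
    have := mul_lt_mul_of_pos_right (Int.ceil_lt_add_one (z / d : K)) hdK
    rwa [add_mul, div_mul_cancel₀ _ hdK.ne', one_mul] at this
  have hle : (⌈(z / d : K)⌉ * d : K) ≤ z + d - 1 := by
    exact_mod_cast Int.le_sub_one_of_lt (by exact_mod_cast hlt)
  calc (⌈(z / d : K)⌉ : K) - z / d = (⌈(z / d : K)⌉ * d - z) / d := by field_simp
    _ ≤ (d - 1) / d := div_le_div_of_nonneg_right (by linarith) hdK.le
    _ = 1 - 1 / d := by field_simp

theorem intCast_div_add_one_div_le {z z' d : ℤ} (hd : 0 < d) (h : (z / d : K) < z' / d) :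
    (z / d : K) + 1 / d ≤ z' / d := by
  have hdK : (0 : K) < d := by exact_mod_cast hd
  have hzz' : z + 1 ≤ z' := by exact_mod_cast (div_lt_div_iff_of_pos_right hdK).mp h
  rw [← add_div]
  exact div_le_div_of_nonneg_right (by exact_mod_cast hzz') hdK.le

theorem le_sub_one_div_of_intCast_div_lt {z n d : ℤ} (hd : 0 < d) (h : (z / d : K) < n) :
    (z / d : K) ≤ n - 1 / d := by
  have hn : (n : K) = ((n * d : ℤ) : K) / d := by push_cast; field_simp
  rw [hn] at h ⊢
  linarith [intCast_div_add_one_div_le hd h]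

theorem add_one_div_le_of_lt_intCast_div {z n d : ℤ} (hd : 0 < d) (h : (n : K) < z / d) :
    (n : K) + 1 / d ≤ z / d := by
  have hn : (n : K) = ((n * d : ℤ) : K) / d := by push_cast; field_simp
  rw [hn] at h ⊢
  exact intCast_div_add_one_div_le hd h

theorem exists_weight_gap_of_coe_eq_lt {α : Type*} {w : α → K} {d n : ℤ} (hd : 0 < d)
    (hgrid : ∀ x, ∃ z : ℤ, w x = z / d) {M : Set α} {T : Finset α}
    (hT : (T : Set α) = {x ∈ M | w x < n}) :
    ∃ t : K, (∀ x ∈ T, w x ≤ t) ∧ ∀ x ∈ M, x ∉ T → t + 1 / d ≤ w x := by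
  have hmem (x : α) : x ∈ T ↔ x ∈ M ∧ w x < n := by
    rw [← Finset.mem_coe, hT]
    rfl
  refine ⟨n - 1 / d, fun x hx => ?_, fun x hxM hxT => ?_⟩
  · obtain ⟨z, hz⟩ := hgrid x
    have hlt := ((hmem x).1 hx).2
    rw [hz] at hlt ⊢
    exact le_sub_one_div_of_intCast_div_lt hd hlt
  · rw [sub_add_cancel]
    exact not_lt.mp fun h => hxT ((hmem x).2 ⟨hxM, h⟩)

theorem exists_weight_gap_of_coe_eq_le {α : Type*} {w : α → K} {d n : ℤ} (hd : 0 < d)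
    (hgrid : ∀ x, ∃ z : ℤ, w x = z / d) {M : Set α} {T : Finset α}
    (hT : (T : Set α) = {x ∈ M | w x ≤ n}) :
    ∃ t : K, (∀ x ∈ T, w x ≤ t) ∧ ∀ x ∈ M, x ∉ T → t + 1 / d ≤ w x := by
  have hmem (x : α) : x ∈ T ↔ x ∈ M ∧ w x ≤ n := by
    rw [← Finset.mem_coe, hT]
    rfl
  refine ⟨n, fun x hx => ((hmem x).1 hx).2, fun x hxM hxT => ?_⟩
  obtain ⟨z, hz⟩ := hgrid x
  have hlt : (n : K) < w x := not_le.mp fun h => hxT ((hmem x).2 ⟨hxM, h⟩)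
  rw [hz] at hlt ⊢
  exact add_one_div_le_of_lt_intCast_div hd hlt

theorem mul_lt_add_mul_of_slopes {x l1 l2 H m1 m2 α β : K} (h1 : l1 < x) (h2 : x < l2)
    (hαβ : α < β) (hm1 : H + α * (l1 - x) ≤ m1) (hm2 : H + β * (l2 - x) ≤ m2) :
    (l2 - l1) * H < (l2 - x) * m1 + (x - l1) * m2 := by
  nlinarith [mul_le_mul_of_nonneg_left hm1 (sub_nonneg.2 h2.le),
    mul_le_mul_of_nonneg_left hm2 (sub_nonneg.2 h1.le),
    mul_pos (mul_pos (sub_pos.2 h1) (sub_pos.2 h2)) (sub_pos.2 hαβ)]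

theorem add_mul_card_sub_le_of_weight_gap {α : Type*} [DecidableEq α] {w : α → K}
    {ρ : Finset α → K} {lam c t δ μ : K} (hlam : 0 ≤ lam) {T S : Finset α}
    (hρ : ρ T ≤ ρ S + (#(T \ S) + #(S \ T)) • c)
    (hT : ∀ x ∈ T, w x ≤ t) (hS : ∀ x ∈ S, x ∉ T → t + δ ≤ w x)
    (hμ1 : lam * t + c ≤ μ) (hμ2 : μ ≤ lam * (t + δ) - c) :
    lam * ∑ x ∈ T, w x + ρ T + μ * (#S - #T) ≤ lam * ∑ x ∈ S, w x + ρ S := by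
  have hTS : ∑ x ∈ T \ S, w x ≤ #(T \ S) * t := by
    rw [← nsmul_eq_mul]
    exact Finset.sum_le_card_nsmul _ _ _ fun x hx => hT x (Finset.mem_sdiff.mp hx).1
  have hST : #(S \ T) * (t + δ) ≤ ∑ x ∈ S \ T, w x := by
    rw [← nsmul_eq_mul]
    exact Finset.card_nsmul_le_sum _ _ _ fun x hx => hS x (Finset.mem_sdiff.mp hx).1
      (Finset.mem_sdiff.mp hx).2
  have hsum : ∑ x ∈ S \ T, w x - ∑ x ∈ T \ S, w x = ∑ x ∈ S, w x - ∑ x ∈ T, w x :=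
    Finset.sum_sdiff_sub_sum_sdiff
  have hcard : (#(S \ T) : K) - #(T \ S) = #S - #T := by
    simpa only [Finset.cast_card] using
      (Finset.sum_sdiff_sub_sum_sdiff (s₁ := T) (s₂ := S) (f := fun _ => (1 : K)))
  rw [nsmul_eq_mul] at hρ
  push_cast at hρ
  rw [← hcard]
  nlinarith [mul_le_mul_of_nonneg_left hTS hlam, mul_le_mul_of_nonneg_left hST hlam,
    mul_nonneg (Nat.cast_nonneg (α := K) #(S \ T)) (sub_nonneg.2 hμ2),
    mul_nonneg (Nat.cast_nonneg (α := K) #(T \ S)) (sub_nonneg.2 hμ1)]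

end OrderedField

section Weight

variable {p a1 b1 a2 b2 : ℤ}

theorem wt_smul_sub (X Y : ℤ × ℤ) :
    wt a1 b1 a2 b2 (p • Y - X) = p * wt a1 b1 a2 b2 Y - wt a1 b1 a2 b2 X := by
  simp only [wt, Prod.fst_sub, Prod.snd_sub, Prod.smul_fst, Prod.smul_snd, smul_eq_mul]
  push_cast
  ring

theorem exists_wt_eq_intCast_div (hD : 0 < a2 * b1 - a1 * b2) :
    ∃ d : ℤ, 0 < d ∧
      ((a2 * b1 - a1 * b2 : ℤ) : ℚ) / (Int.gcd (a1 - a2) (b1 - b2) : ℚ) = d ∧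
      ∀ P, ∃ z : ℤ, wt a1 b1 a2 b2 P = z / d := by
  set g : ℤ := (Int.gcd (a1 - a2) (b1 - b2) : ℤ)
  obtain ⟨u, hu⟩ : g ∣ a1 - a2 := Int.gcd_dvd_left _ _
  obtain ⟨v, hv⟩ : g ∣ b1 - b2 := Int.gcd_dvd_right _ _
  have hDd : a2 * b1 - a1 * b2 = g * (a2 * v - u * b2) := by
    linear_combination a2 * hv - b2 * hu
  have hg : 0 < g := by
    refine Int.natCast_pos.mpr (Int.gcd_pos_iff.mpr ?_)
    by_contra! h
    rw [sub_eq_zero.mp h.1, sub_eq_zero.mp h.2, sub_self] at hD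
    exact hD.false
  have hgQ : (g : ℚ) ≠ 0 := by exact_mod_cast hg.ne'
  refine ⟨a2 * v - u * b2, pos_of_mul_pos_right (hDd ▸ hD) hg.le, ?_, fun P => ?_⟩
  · rw [hDd, Int.cast_mul, show ((Int.gcd (a1 - a2) (b1 - b2) : ℕ) : ℚ) = g by simp [g]]
    field_simp
  · refine ⟨v * P.1 - u * P.2, ?_⟩
    have hnum : (b1 - b2) * P.1 + (a2 - a1) * P.2 = g * (v * P.1 - u * P.2) := by
      linear_combination P.1 * hv - P.2 * hu
    rw [wt, hnum, hDd, Int.cast_mul, Int.cast_mul]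
    exact mul_div_mul_left _ _ hgQ

theorem permMin_toList_get {α R : Type*} [DecidableEq α] [LinearOrder R] [AddCommMonoid R]
    (c : α → α → R) (S : Finset α) :
    (permMin fun i j : Fin S.toList.length => c (S.toList.get i) (S.toList.get j)) =
      permMinOn c S := by
  let e : Fin S.toList.length ≃ S :=
    (List.Nodup.getEquiv _ S.nodup_toList).trans
      (Equiv.subtypeEquivRight fun _ => Finset.mem_toList)
  have he (i : Fin S.toList.length) : S.toList.get i = e i := rfl
  simp only [he]
  exact permMin_comp_equiv (fun x y : S => c x y) e

theorem hMin_eq_permMinOn (S : Finset (ℤ × ℤ)) :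
    hMin p a1 b1 a2 b2 S.val = permMinOn (fun X Y => ⌈wt a1 b1 a2 b2 (p • Y - X)⌉) S := by
  rw [← permMin_toList_get]
  unfold hMin hTau listFn permMin
  rfl

theorem h2Min_eq_permMinOn (S : Finset (ℤ × ℤ)) :
    h2Min p a1 b1 a2 b2 S.val = permMinOn (fun X Y =>
      (⌈wt a1 b1 a2 b2 (p • Y - X)⌉ : ℚ) - wt a1 b1 a2 b2 (p • Y - X)) S := by
  rw [← permMin_toList_get]
  unfold h2Min h2Tau listFn permMin
  rfl

theorem hMin_eq_add_h2Min (S : Finset (ℤ × ℤ)) :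
    (hMin p a1 b1 a2 b2 S.val : ℚ) =
      (p - 1) * ∑ P ∈ S, wt a1 b1 a2 b2 P + h2Min p a1 b1 a2 b2 S.val := by
  have hcast := map_permMin (Int.castAddHom ℚ) Int.cast_mono
    fun X Y : S => ⌈wt a1 b1 a2 b2 (p • (Y : ℤ × ℤ) - X)⌉
  have hsplit : (fun X Y : S => ((⌈wt a1 b1 a2 b2 (p • (Y : ℤ × ℤ) - X)⌉ : ℤ) : ℚ)) =
      fun X Y : S => (⌈wt a1 b1 a2 b2 (p • (Y : ℤ × ℤ) - X)⌉ -
        wt a1 b1 a2 b2 (p • (Y : ℤ × ℤ) - X)) + p * wt a1 b1 a2 b2 Y - wt a1 b1 a2 b2 X := by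
    funext X Y
    rw [wt_smul_sub]
    ring
  simp only [Int.coe_castAddHom] at hcast
  rw [hMin_eq_permMinOn, h2Min_eq_permMinOn, permMinOn, permMinOn, hcast, hsplit, permMin_add_sub,
    Finset.sum_coe_sort S (fun P => p * wt a1 b1 a2 b2 P), Finset.sum_coe_sort, ← Finset.mul_sum]
  ring

theorem hMin_add_mul_card_sub_le {d : ℤ} (hd : 0 < d) (hp : 1 ≤ p)
    (hgrid : ∀ P, ∃ z : ℤ, wt a1 b1 a2 b2 P = z / d) {t μ : ℚ} {T S : Finset (ℤ × ℤ)}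
    (hT : ∀ P ∈ T, wt a1 b1 a2 b2 P ≤ t) (hS : ∀ P ∈ S, P ∉ T → t + 1 / d ≤ wt a1 b1 a2 b2 P)
    (hμ1 : (p - 1) * t + (1 - 1 / d) ≤ μ) (hμ2 : μ ≤ (p - 1) * (t + 1 / d) - (1 - 1 / d)) :
    (hMin p a1 b1 a2 b2 T.val : ℚ) + μ * (#S - #T) ≤ hMin p a1 b1 a2 b2 S.val := by
  have hcost0 (X Y : ℤ × ℤ) :
      0 ≤ (⌈wt a1 b1 a2 b2 (p • Y - X)⌉ : ℚ) - wt a1 b1 a2 b2 (p • Y - X) :=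
    sub_nonneg.2 (Int.le_ceil _)
  have hcost (X Y : ℤ × ℤ) :
      (⌈wt a1 b1 a2 b2 (p • Y - X)⌉ : ℚ) - wt a1 b1 a2 b2 (p • Y - X) ≤ 1 - 1 / d := by
    obtain ⟨z, hz⟩ := hgrid (p • Y - X)
    rw [hz]
    exact ceil_intCast_div_sub_le hd
  rw [hMin_eq_add_h2Min, hMin_eq_add_h2Min]
  have hlam : (0 : ℚ) ≤ p - 1 := sub_nonneg.2 (by exact_mod_cast hp)
  have hρ : h2Min p a1 b1 a2 b2 T.val ≤
      h2Min p a1 b1 a2 b2 S.val + (#(T \ S) + #(S \ T)) • (1 - 1 / (d : ℚ)) := by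
    rw [h2Min_eq_permMinOn, h2Min_eq_permMinOn]
    exact permMinOn_le_add_card_sdiff hcost0 hcost S T
  exact add_mul_card_sub_le_of_weight_gap (ρ := fun U => h2Min p a1 b1 a2 b2 U.val) hlam hρ hT hS
    hμ1 hμ2

theorem hMin_lt_chord_of_weight_gap {d : ℤ} (hd : 0 < d) (hp : 2 * d - 1 < p)
    (hgrid : ∀ P, ∃ z : ℤ, wt a1 b1 a2 b2 P = z / d) {M : Set (ℤ × ℤ)} {T : Finset (ℤ × ℤ)}
    (hgap : ∃ t : ℚ, (∀ P ∈ T, wt a1 b1 a2 b2 P ≤ t) ∧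
      ∀ P ∈ M, P ∉ T → t + 1 / d ≤ wt a1 b1 a2 b2 P) {m : ℕ → ℤ}
    (hm : ∀ l, ∃ S : Finset (ℤ × ℤ), (S : Set (ℤ × ℤ)) ⊆ M ∧ S.card = l ∧
      m l = hMin p a1 b1 a2 b2 S.val)
    (l1 l2 : ℕ) (h1 : l1 < T.card) (h2 : T.card < l2) :
    ((l2 : ℤ) - T.card) * m l1 + ((T.card : ℤ) - l1) * m l2 >
      ((l2 : ℤ) - l1) * hMin p a1 b1 a2 b2 T.val := by
  obtain ⟨t, hT, hM⟩ := hgap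
  obtain ⟨S1, hS1M, rfl, hm1⟩ := hm l1
  obtain ⟨S2, hS2M, rfl, hm2⟩ := hm l2
  have hdQ : (0 : ℚ) < d := by exact_mod_cast hd
  have hpQ : (2 * d - 1 : ℚ) < p := by exact_mod_cast hp
  set α : ℚ := (p - 1) * t + (1 - 1 / d)
  set β : ℚ := (p - 1) * (t + 1 / d) - (1 - 1 / d)
  have hαβ : α < β := by
    have hβα : β - α = (p - (2 * d - 1)) / d := by
      simp only [α, β]
      field_simp
      ring
    linarith [div_pos (sub_pos.2 hpQ) hdQ]
  have hbound {S : Finset (ℤ × ℤ)} (hSM : (S : Set (ℤ × ℤ)) ⊆ M) {μ : ℚ} (hμ1 : α ≤ μ)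
      (hμ2 : μ ≤ β) :=
    hMin_add_mul_card_sub_le hd (by omega) hgrid hT (fun P hP hPT => hM P (hSM hP) hPT) hμ1 hμ2
  rw [hm1, hm2, gt_iff_lt]
  exact_mod_cast mul_lt_add_mul_of_slopes (by exact_mod_cast h1) (by exact_mod_cast h2) hαβ
    (hbound hS1M le_rfl hαβ.le) (hbound hS2M hαβ.le le_rfl)

end Weight

theorem statement12_general (p a1 b1 a2 b2 : ℤ)
    (hD : 0 < a2 * b1 - a1 * b2)
    (hpg : 2 * ((a2 * b1 - a1 * b2 : ℤ) : ℚ) /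
      (Int.gcd (a1 - a2) (b1 - b2) : ℚ) + 1 < (p : ℚ))
    (m : ℕ → ℤ)
    (hm : ∀ l : ℕ, IsLeast {h : ℤ | ∃ S : Finset (ℤ × ℤ),
      (S : Set (ℤ × ℤ)) ⊆ MDelta a1 b1 a2 b2 ∧ S.card = l ∧
      h = hMin p a1 b1 a2 b2 S.val} (m l))
    (k : ℕ)
    (Tk T'k : Finset (ℤ × ℤ))
    (hTk : (Tk : Set (ℤ × ℤ)) =
      {P ∈ MDelta a1 b1 a2 b2 | wt a1 b1 a2 b2 P < (k : ℚ)})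
    (hT'k : (T'k : Set (ℤ × ℤ)) =
      {P ∈ MDelta a1 b1 a2 b2 | wt a1 b1 a2 b2 P ≤ (k : ℚ)}) :
    (∀ l1 l2 : ℕ, l1 < Tk.card → Tk.card < l2 →
      ((l2 : ℤ) - Tk.card) * m l1 + ((Tk.card : ℤ) - l1) * m l2 >
        ((l2 : ℤ) - l1) * hMin p a1 b1 a2 b2 Tk.val) ∧
    (∀ l1 l2 : ℕ, l1 < T'k.card → T'k.card < l2 →
      ((l2 : ℤ) - T'k.card) * m l1 + ((T'k.card : ℤ) - l1) * m l2 >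
        ((l2 : ℤ) - l1) * hMin p a1 b1 a2 b2 T'k.val) := by
  obtain ⟨d, hd, hDd, hgrid⟩ := exists_wt_eq_intCast_div hD
  have hp : 2 * d - 1 < p := by
    rw [mul_div_assoc, hDd] at hpg
    have : 2 * d + 1 < p := by exact_mod_cast hpg
    omega
  have hmin (l : ℕ) := (hm l).1
  exact ⟨hMin_lt_chord_of_weight_gap hd hp hgrid
      (exists_weight_gap_of_coe_eq_lt (n := k) hd hgrid (by simpa using hTk)) hmin,
    hMin_lt_chord_of_weight_gap hd hp hgrid
      (exists_weight_gap_of_coe_eq_le (n := k) hd hgrid (by simpa using hT'k)) hmin⟩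

/-- Let `g = gcd(a1-a2, b1-b2)` and `p` a prime with `p ∤ D` and
`p > 2·D/g + 1`.  Writing `m(ℓ)` for the minimum of `h(S)` over subsets
`S ⊆ M(Δ)` of cardinality `ℓ`, the points `(x_k, h(T_k))` and `(x'_k, h(T'_k))`
are vertices of the lower convex hull of `{(ℓ, m(ℓ))}`: for all `ℓ1 < x_k < ℓ2`
one has `(ℓ2 - x_k)·m(ℓ1) + (x_k - ℓ1)·m(ℓ2) > (ℓ2 - ℓ1)·h(T_k)`, and
similarly at `x'_k`. -/
theorem statement12 (p a1 b1 a2 b2 : ℤ)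
    (ha1 : 0 ≤ a1) (hb1 : 0 ≤ b1) (ha2 : 0 ≤ a2) (hb2 : 0 ≤ b2)
    (hD : 0 < a2 * b1 - a1 * b2)
    (hp : Prime p) (hpD : ¬ p ∣ (a2 * b1 - a1 * b2))
    (hpg : 2 * ((a2 * b1 - a1 * b2 : ℤ) : ℚ) /
      (Int.gcd (a1 - a2) (b1 - b2) : ℚ) + 1 < (p : ℚ))
    (m : ℕ → ℤ)
    (hm : ∀ l : ℕ, IsLeast {h : ℤ | ∃ S : Finset (ℤ × ℤ),
      (S : Set (ℤ × ℤ)) ⊆ MDelta a1 b1 a2 b2 ∧ S.card = l ∧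
      h = hMin p a1 b1 a2 b2 S.val} (m l))
    (k : ℕ) (hk : 1 ≤ k)
    (Tk T'k : Finset (ℤ × ℤ))
    (hTk : (Tk : Set (ℤ × ℤ)) =
      {P ∈ MDelta a1 b1 a2 b2 | wt a1 b1 a2 b2 P < (k : ℚ)})
    (hT'k : (T'k : Set (ℤ × ℤ)) =
      {P ∈ MDelta a1 b1 a2 b2 | wt a1 b1 a2 b2 P ≤ (k : ℚ)}) :
    (∀ l1 l2 : ℕ, l1 < Tk.card → Tk.card < l2 →
      ((l2 : ℤ) - Tk.card) * m l1 + ((Tk.card : ℤ) - l1) * m l2 >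
        ((l2 : ℤ) - l1) * hMin p a1 b1 a2 b2 Tk.val) ∧
    (∀ l1 l2 : ℕ, l1 < T'k.card → T'k.card < l2 →
      ((l2 : ℤ) - T'k.card) * m l1 + ((T'k.card : ℤ) - l1) * m l2 >
        ((l2 : ℤ) - l1) * hMin p a1 b1 a2 b2 T'k.val) :=
  statement12_general p a1 b1 a2 b2 hD hpg m hm k Tk T'k hTk hT'k
end
end
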